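/- arXiv:2508.09833 — 4 statements merged into one kernel-verified Lean document; each statement's English description precedes it below -/
import Mathlib

section
/- Let ℓ ≥ 1 and N > ℓ be integers and let λ_i = i(i+1). Then Σ_{i=1, i≠ℓ}^{N-1} λ_ℓ(2i+1) / ( λ_i |i-ℓ| (i+ℓ+1) ) = 2(H_{ℓ-1} + H_ℓ + H_{ℓ+1}) - 1 - (H_{2ℓ} + H_{2ℓ+1}) - (H_N + H_{N-1}) + H_{N+ℓ} + H_{N-ℓ-1}, where H_k is the k-th harmonic number (with H_0 = 0). -/
open Finset

lemma sum_inv_shift (n c : ℕ) : ∑ i ∈ Icc 1 n, (1:ℚ)/(i+c) = harmonic (n+c) - harmonic c := by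
  induction n with
  | zero => simp
  | succ n ih =>
    rw [Finset.sum_Icc_succ_top (by omega), ih, show n+1+c = (n+c)+1 by ring, harmonic_succ]
    push_cast
    ring

lemma sum_inv_reflect (n : ℕ) : ∑ i ∈ Icc 1 n, (1:ℚ)/((n:ℚ)+1-i) = harmonic n := by
  rw [harmonic, show ∑ i ∈ range n, ((i+1:ℕ):ℚ)⁻¹ = ∑ j ∈ range n, ((j:ℚ)+1)⁻¹ by push_cast; rfl,
    ← Finset.sum_range_reflect (fun j => ((j:ℚ)+1)⁻¹) n,
    ← Finset.Ico_add_one_right_eq_Icc, Finset.sum_Ico_eq_sum_range]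
  apply Finset.sum_congr (by norm_num)
  intro j hj
  have hj' : j < n := by simpa using hj
  rw [Nat.sub_sub, Nat.cast_sub (by omega)]
  push_cast
  rw [one_div, inv_inj]
  ring

/-- Exact telescoped evaluation of Σ_{i=1,i≠ℓ}^{N-1} λ_ℓ(2i+1)/(λ_i |i-ℓ| (i+ℓ+1)). -/
theorem telescoped_sum (ℓ N : ℕ) (hℓ : 1 ≤ ℓ) (hN : ℓ < N) :
    ∑ i ∈ (Finset.Icc 1 (N - 1)).erase ℓ,
        ((ℓ : ℚ) * (ℓ + 1) * (2 * (i : ℚ) + 1)) /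
          ((i : ℚ) * ((i : ℚ) + 1) * |(i : ℚ) - (ℓ : ℚ)| * ((i : ℚ) + (ℓ : ℚ) + 1))
      = 2 * (harmonic (ℓ - 1) + harmonic ℓ + harmonic (ℓ + 1)) - 1
          - (harmonic (2 * ℓ) + harmonic (2 * ℓ + 1))
          - (harmonic N + harmonic (N - 1))
          + harmonic (N + ℓ) + harmonic (N - ℓ - 1) := by
  induction N, hN using Nat.le_induction with
  | base =>
    -- N = ℓ + 1
    have hset : (Icc 1 (ℓ+1-1)).erase ℓ = Icc 1 (ℓ-1) := by
      ext x; simp [Finset.mem_erase, Finset.mem_Icc]; omega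
    rw [hset]
    have hterm : ∀ i ∈ Icc 1 (ℓ-1),
        ((ℓ : ℚ) * (ℓ + 1) * (2 * (i : ℚ) + 1)) /
          ((i : ℚ) * ((i : ℚ) + 1) * |(i : ℚ) - (ℓ : ℚ)| * ((i : ℚ) + (ℓ : ℚ) + 1))
        = 1/(i:ℚ) + 1/((i:ℚ)+1) + 1/((ℓ:ℚ)-i) - 1/((i:ℚ)+((ℓ:ℚ)+1)) := by
      intro i hi
      simp only [Finset.mem_Icc] at hi
      have h1 : (1:ℚ) ≤ (i:ℚ) := by exact_mod_cast hi.1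
      have h2 : (i:ℚ) < (ℓ:ℚ) := by exact_mod_cast (by omega : i < ℓ)
      rw [abs_of_neg (by linarith), neg_sub]
      have n1 : (i:ℚ) ≠ 0 := by linarith
      have n2 : (i:ℚ)+1 ≠ 0 := by linarith
      have n3 : (ℓ:ℚ)-(i:ℚ) ≠ 0 := by linarith
      have n4 : (i:ℚ)+(ℓ:ℚ)+1 ≠ 0 := by linarith
      field_simp
      ring
    rw [Finset.sum_congr rfl hterm]
    rw [Finset.sum_sub_distrib, Finset.sum_add_distrib, Finset.sum_add_distrib]
    have e1 : ∑ i ∈ Icc 1 (ℓ-1), (1:ℚ)/(i:ℚ) = harmonic (ℓ-1) := by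
      simpa using sum_inv_shift (ℓ-1) 0
    have e2 : ∑ i ∈ Icc 1 (ℓ-1), (1:ℚ)/((i:ℚ)+1) = harmonic ℓ - 1 := by
      have := sum_inv_shift (ℓ-1) 1
      rw [show ℓ-1+1 = ℓ by omega] at this
      norm_num [harmonic_succ] at this ⊢
      convert this using 2
    have e3 : ∑ i ∈ Icc 1 (ℓ-1), (1:ℚ)/((ℓ:ℚ)-i) = harmonic (ℓ-1) := by
      have := sum_inv_reflect (ℓ-1)
      have hc : ((ℓ-1:ℕ):ℚ) + 1 = (ℓ:ℚ) := by
        rw [Nat.cast_sub hℓ]; ring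
      simp only [hc] at this
      exact this
    have e4 : ∑ i ∈ Icc 1 (ℓ-1), (1:ℚ)/((i:ℚ)+((ℓ:ℚ)+1)) = harmonic (2*ℓ) - harmonic (ℓ+1) := by
      have := sum_inv_shift (ℓ-1) (ℓ+1)
      rw [show ℓ-1+(ℓ+1) = 2*ℓ by omega] at this
      push_cast at this
      convert this using 1
    rw [e1, e2, e3, e4]
    rw [show ℓ+1-1 = ℓ by omega, show ℓ+1+ℓ = 2*ℓ+1 by omega, show ℓ+1-ℓ-1 = 0 by omega,
      harmonic_zero]
    ring
  | succ N hN ih =>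
    obtain ⟨K, rfl⟩ : ∃ K, N = ℓ+1+K := ⟨N-(ℓ+1), by omega⟩
    rw [show ℓ+1+K-1 = ℓ+K by omega, show ℓ+1+K-ℓ-1 = K by omega] at ih
    have hset : (Icc 1 (ℓ+1+K+1-1)).erase ℓ
        = insert (ℓ+K+1) ((Icc 1 (ℓ+K)).erase ℓ) := by
      ext x; simp [Finset.mem_erase, Finset.mem_Icc]; omega
    rw [hset, Finset.sum_insert (by simp only [Finset.mem_erase, Finset.mem_Icc]; omega), ih]
    rw [show ℓ+1+K+1-1 = ℓ+1+K by omega, show ℓ+1+K+1-ℓ-1 = K+1 by omega,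
      show ℓ+1+K+1 = (ℓ+1+K)+1 by omega, show ℓ+1+K = (ℓ+K)+1 by omega,
      show (ℓ+K)+1+1+ℓ = ((ℓ+K)+1+ℓ)+1 by omega, show K+1 = K+1 from rfl,
      harmonic_succ, harmonic_succ, harmonic_succ, harmonic_succ (n := K)]
    have habs : |((ℓ+K+1:ℕ):ℚ) - (ℓ:ℚ)| = (K:ℚ)+1 := by
      rw [abs_of_pos]
      · push_cast; ring
      · push_cast; linarith [Nat.cast_nonneg (α := ℚ) K]
    rw [habs]
    have hK : (0:ℚ) ≤ (K:ℚ) := Nat.cast_nonneg K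
    have hL : (1:ℚ) ≤ (ℓ:ℚ) := by exact_mod_cast hℓ
    have n1 : ((ℓ+K+1:ℕ):ℚ) ≠ 0 := by push_cast; linarith
    have n2 : ((ℓ+K+1:ℕ):ℚ)+1 ≠ 0 := by push_cast; linarith
    have n3 : (K:ℚ)+1 ≠ 0 := by linarith
    have n4 : ((ℓ+K+1:ℕ):ℚ)+(ℓ:ℚ)+1 ≠ 0 := by push_cast; linarith
    simp only [harmonic_succ]
    push_cast
    field_simp
    ring
end

section
/- Let ℓ ≥ 1 and N > ℓ be integers. Then 2(H_{ℓ-1} + H_ℓ + H_{ℓ+1}) - 1 - (H_{2ℓ} + H_{2ℓ+1}) - (H_N + H_{N-1}) + H_{N+ℓ} + H_{N-ℓ-1} ≤ 4 H_ℓ, where H_k denotes the k-th harmonic number (with H_0 = 0). -/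
lemma harmonic_add' (n k : ℕ) :
    harmonic (n + k) = harmonic n + ∑ j ∈ Finset.range k, ((n + j + 1 : ℕ) : ℚ)⁻¹ := by
  induction k with
  | zero => simp
  | succ k ih => rw [← Nat.add_assoc, harmonic_succ, ih, Finset.sum_range_succ]; ring

lemma harmonic_mono' {a b : ℕ} (h : a ≤ b) : harmonic a ≤ harmonic b := by
  obtain ⟨k, rfl⟩ := Nat.exists_eq_add_of_le h
  rw [harmonic_add']
  have : 0 ≤ ∑ j ∈ Finset.range k, ((a + j + 1 : ℕ) : ℚ)⁻¹ :=
    Finset.sum_nonneg fun j _ => by positivity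
  linarith

/-- The telescoped value is bounded by 4H_ℓ, uniformly in N. -/
theorem telescoped_bound (ℓ N : ℕ) (hℓ : 1 ≤ ℓ) (hN : ℓ < N) :
    2 * (harmonic (ℓ - 1) + harmonic ℓ + harmonic (ℓ + 1)) - 1
        - (harmonic (2 * ℓ) + harmonic (2 * ℓ + 1))
        - (harmonic N + harmonic (N - 1))
        + harmonic (N + ℓ) + harmonic (N - ℓ - 1)
      ≤ 4 * harmonic ℓ := by
  have hNe : N - ℓ - 1 + ℓ = N - 1 := by omega
  have hA : harmonic (N + ℓ) - harmonic N ≤ harmonic (N - 1) - harmonic (N - ℓ - 1) := by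
    rw [← hNe, harmonic_add' N ℓ, harmonic_add' (N - ℓ - 1) ℓ]
    have : ∑ j ∈ Finset.range ℓ, ((N + j + 1 : ℕ) : ℚ)⁻¹ ≤
        ∑ j ∈ Finset.range ℓ, ((N - ℓ - 1 + j + 1 : ℕ) : ℚ)⁻¹ := by
      apply Finset.sum_le_sum
      intro j _
      apply inv_anti₀
      · exact_mod_cast Nat.succ_pos _
      · exact_mod_cast (by omega : N - ℓ - 1 + j + 1 ≤ N + j + 1)
    linarith
  have h1 : harmonic ℓ ≤ harmonic (2 * ℓ) := harmonic_mono' (by omega)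
  have h2 : harmonic ℓ ≤ harmonic (2 * ℓ + 1) := harmonic_mono' (by omega)
  obtain ⟨m, rfl⟩ : ∃ m, ℓ = m + 1 := ⟨ℓ - 1, by omega⟩
  have h3 : harmonic (m + 1) = harmonic m + ((m + 1 : ℕ) : ℚ)⁻¹ := harmonic_succ m
  have h4 : harmonic (m + 2) = harmonic (m + 1) + ((m + 2 : ℕ) : ℚ)⁻¹ := harmonic_succ (m + 1)
  have h5 : ((m + 2 : ℕ) : ℚ)⁻¹ ≤ ((m + 1 : ℕ) : ℚ)⁻¹ := by
    apply inv_anti₀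
    · exact_mod_cast Nat.succ_pos m
    · exact_mod_cast (by omega : m + 1 ≤ m + 2)
  simp only [Nat.add_sub_cancel] at *
  linarith
end

section
/- Let N ≥ 2, ℓ ≥ 1 be integers, λ_i = i(i+1), and let w : ℕ × ℕ → ℝ be a symmetric function (w(i,k) = w(k,i), abstracting (W^{iℓk})²) satisfying, for every i with 1 ≤ i ≤ N-1: (i) Σ_{k=1}^{N-1} λ_k (2k+1) w(i,k) = ((N²-1)(λ_i + λ_ℓ) - 2 λ_i λ_ℓ) / (N(N²-1)); (ii) Σ_{k=1}^{N-1} (-1)^k λ_k (2k+1) w(i,k) = (-1)^{N+1}(λ_i + λ_ℓ) V(i), for some function V : ℕ → ℝ; (iii) Σ_{i=1}^{N-1} ((2i+1)/λ_i)(1/N + (-1)^{i+ℓ+N} V(i)) = 2 H_ℓ / N; (iv) Σ_{i=1}^{N-1} (-1)^i (2i+1) V(i) = -V(0). Then 2A := Σ_{i,k=1}^{N-1} (1 - (-1)^{i+ℓ+k}) λ_k (2i+1)(2k+1) w(i,k) / λ_i = (N² - 1 - 2λ_ℓ)/N + 2 λ_ℓ H_ℓ / N + (-1)^{ℓ+N+1}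 V(0), where H_ℓ is the ℓ-th harmonic number. -/
open Finset

lemma sum_odd_aux (n : ℕ) :
    ∑ i ∈ Finset.Icc 1 n, (2 * (i : ℝ) + 1) = ((n : ℝ) + 1) ^ 2 - 1 := by
  induction n with
  | zero => simp
  | succ n ih =>
    rw [Finset.sum_Icc_succ_top (by omega), ih]
    push_cast
    ring

/-- Abstract computation of 2A in the evaluation of the negative Ricci part. -/
theorem computation_2A (N ℓ : ℕ) (hN : 2 ≤ N) (hℓ : 1 ≤ ℓ)
    (w : ℕ → ℕ → ℝ) (V : ℕ → ℝ)
    (hsymm : ∀ i k, w i k = w k i)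
    (h1 : ∀ i ∈ Finset.Icc 1 (N - 1),
      ∑ k ∈ Finset.Icc 1 (N - 1), ((k : ℝ) * (k + 1)) * (2 * (k : ℝ) + 1) * w i k
        = (((N : ℝ) ^ 2 - 1) * ((i : ℝ) * (i + 1) + (ℓ : ℝ) * (ℓ + 1))
            - 2 * ((i : ℝ) * (i + 1)) * ((ℓ : ℝ) * (ℓ + 1)))
          / ((N : ℝ) * ((N : ℝ) ^ 2 - 1)))
    (h2 : ∀ i ∈ Finset.Icc 1 (N - 1),
      ∑ k ∈ Finset.Icc 1 (N - 1), (-1 : ℝ) ^ k * ((k : ℝ) * (k + 1)) * (2 * (k : ℝ) + 1) * w i k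
        = (-1 : ℝ) ^ (N + 1) * ((i : ℝ) * (i + 1) + (ℓ : ℝ) * (ℓ + 1)) * V i)
    (h3 : ∑ i ∈ Finset.Icc 1 (N - 1),
        ((2 * (i : ℝ) + 1) / ((i : ℝ) * (i + 1)))
          * (1 / (N : ℝ) + (-1 : ℝ) ^ (i + ℓ + N) * V i)
      = 2 * (harmonic ℓ : ℝ) / (N : ℝ))
    (h4 : ∑ i ∈ Finset.Icc 1 (N - 1), (-1 : ℝ) ^ i * (2 * (i : ℝ) + 1) * V i = -V 0) :
    ∑ i ∈ Finset.Icc 1 (N - 1), ∑ k ∈ Finset.Icc 1 (N - 1),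
        (1 - (-1 : ℝ) ^ (i + ℓ + k)) * ((k : ℝ) * (k + 1)) * (2 * (i : ℝ) + 1)
          * (2 * (k : ℝ) + 1) * w i k / ((i : ℝ) * (i + 1))
      = ((N : ℝ) ^ 2 - 1 - 2 * ((ℓ : ℝ) * (ℓ + 1))) / (N : ℝ)
        + 2 * ((ℓ : ℝ) * (ℓ + 1)) * (harmonic ℓ : ℝ) / (N : ℝ)
        + (-1 : ℝ) ^ (ℓ + N + 1) * V 0 := by
  have hN0 : (N : ℝ) ≠ 0 := by positivity
  have hN2 : (2 : ℝ) ≤ (N : ℝ) := by exact_mod_cast hN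
  have hN1 : ((N : ℝ) ^ 2 - 1) ≠ 0 := by nlinarith
  have hD : (N : ℝ) * ((N : ℝ) ^ 2 - 1) ≠ 0 := mul_ne_zero hN0 hN1
  have hD' : (N : ℝ) ^ 3 - (N : ℝ) ≠ 0 := by
    intro h; apply hD; nlinarith [h]
  have hD'' : -(N : ℝ) + (N : ℝ) ^ 3 ≠ 0 := by
    intro h; apply hD'; linarith
  have key : ∀ i ∈ Finset.Icc 1 (N - 1),
      ∑ k ∈ Finset.Icc 1 (N - 1),
        (1 - (-1 : ℝ) ^ (i + ℓ + k)) * ((k : ℝ) * (k + 1)) * (2 * (i : ℝ) + 1)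
          * (2 * (k : ℝ) + 1) * w i k / ((i : ℝ) * (i + 1))
      = (2 * (i : ℝ) + 1) / (N : ℝ)
        + (2 * (i : ℝ) + 1) * (-2 * ((ℓ : ℝ) * ((ℓ:ℝ) + 1)) / ((N : ℝ) * ((N : ℝ) ^ 2 - 1)))
        + ((ℓ : ℝ) * ((ℓ:ℝ) + 1)) * ((2 * (i : ℝ) + 1) / ((i : ℝ) * (i + 1))
            * (1 / (N : ℝ) + (-1 : ℝ) ^ (i + ℓ + N) * V i))
        + (-1 : ℝ) ^ (ℓ + N) * ((-1 : ℝ) ^ i * (2 * (i : ℝ) + 1) * V i) := by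
    intro i hi
    have hi1 : 1 ≤ i := (Finset.mem_Icc.mp hi).1
    have hi0 : (i : ℝ) ≠ 0 := by
      exact_mod_cast Nat.cast_ne_zero.mpr (by omega)
    have hip : ((i : ℝ) + 1) ≠ 0 := by positivity
    have step : ∑ k ∈ Finset.Icc 1 (N - 1),
        (1 - (-1 : ℝ) ^ (i + ℓ + k)) * ((k : ℝ) * (k + 1)) * (2 * (i : ℝ) + 1)
          * (2 * (k : ℝ) + 1) * w i k / ((i : ℝ) * (i + 1))
        = (2 * (i : ℝ) + 1) / ((i : ℝ) * (i + 1))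
            * (∑ k ∈ Finset.Icc 1 (N - 1),
                ((k : ℝ) * (k + 1)) * (2 * (k : ℝ) + 1) * w i k)
          - (2 * (i : ℝ) + 1) * (-1 : ℝ) ^ (i + ℓ) / ((i : ℝ) * (i + 1))
            * (∑ k ∈ Finset.Icc 1 (N - 1),
                (-1 : ℝ) ^ k * ((k : ℝ) * (k + 1)) * (2 * (k : ℝ) + 1) * w i k) := by
      rw [Finset.mul_sum, Finset.mul_sum, ← Finset.sum_sub_distrib]
      refine Finset.sum_congr rfl fun k _ => ?_
      rw [pow_add]
      ring
    rw [step, h1 i hi, h2 i hi]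
    field_simp
    ring
  rw [Finset.sum_congr rfl key]
  simp only [Finset.sum_add_distrib]
  rw [← Finset.sum_div, ← Finset.sum_mul, ← Finset.mul_sum, ← Finset.mul_sum, h3, h4,
    sum_odd_aux]
  have hcast : ((N - 1 : ℕ) : ℝ) = (N : ℝ) - 1 := by
    have : (1 : ℕ) ≤ N := by omega
    push_cast [Nat.cast_sub this]
    ring
  rw [hcast]
  field_simp
  ring
end

section
/- Let N ≥ 2, ℓ ≥ 1 be integers and let w : ℕ × ℕ → ℝ be symmetric with: (i) Σ_{k=0}^{N-1} (2k+1) w(i,k) = 1/N for all 1 ≤ i ≤ N-1; (ii) Σ_{k=0}^{N-1} (-1)^k (2k+1) w(i,k) = (-1)^{N+1} V(i) for all 1 ≤ i ≤ N-1, for some V : ℕ → ℝ with Σ_{i=1}^{N-1} (-1)^i (2i+1) V(i) = -V(0); (iii) w(i,0) = 0 whenever i + ℓ is odd (triangle rule). Then 2B := Σ_{i,k=1}^{N-1} (1 - (-1)^{i+ℓ+k}) (2i+1)(2k+1) w(i,k) = (N²-1)/N + (-1)^{ℓ+N+1} V(0). -/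
open Finset

lemma sum_odd_sq (n : ℕ) : ∑ i ∈ Finset.range n, (2 * (i : ℝ) + 1) = (n : ℝ) ^ 2 := by
  induction n with
  | zero => simp
  | succ m ih => rw [Finset.sum_range_succ, ih]; push_cast; ring

/-- Abstract computation of 2B in the evaluation of the negative Ricci part. -/
theorem computation_2B (N ℓ : ℕ) (hN : 2 ≤ N) (hℓ : 1 ≤ ℓ)
    (w : ℕ → ℕ → ℝ) (V : ℕ → ℝ)
    (hsymm : ∀ i k, w i k = w k i)
    (h1 : ∀ i ∈ Finset.Icc 1 (N - 1),
      ∑ k ∈ Finset.range N, (2 * (k : ℝ) + 1) * w i k = 1 / (N : ℝ))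
    (h2 : ∀ i ∈ Finset.Icc 1 (N - 1),
      ∑ k ∈ Finset.range N, (-1 : ℝ) ^ k * (2 * (k : ℝ) + 1) * w i k
        = (-1 : ℝ) ^ (N + 1) * V i)
    (h4 : ∑ i ∈ Finset.Icc 1 (N - 1), (-1 : ℝ) ^ i * (2 * (i : ℝ) + 1) * V i = -V 0)
    (htri : ∀ i, Odd (i + ℓ) → w i 0 = 0) :
    ∑ i ∈ Finset.Icc 1 (N - 1), ∑ k ∈ Finset.Icc 1 (N - 1),
        (1 - (-1 : ℝ) ^ (i + ℓ + k)) * (2 * (i : ℝ) + 1) * (2 * (k : ℝ) + 1) * w i k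
      = ((N : ℝ) ^ 2 - 1) / (N : ℝ) + (-1 : ℝ) ^ (ℓ + N + 1) * V 0 := by
  have hNpos : (0 : ℝ) < (N : ℝ) := by positivity
  have hins : Finset.range N = insert 0 (Finset.Icc 1 (N - 1)) := by
    ext x
    simp only [Finset.mem_range, Finset.mem_insert, Finset.mem_Icc]
    omega
  have h0 : (0 : ℕ) ∉ Finset.Icc 1 (N - 1) := by simp
  have hsum0 : ∀ f : ℕ → ℝ,
      ∑ k ∈ Finset.Icc 1 (N - 1), f k = (∑ k ∈ Finset.range N, f k) - f 0 := by
    intro f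
    rw [hins, Finset.sum_insert h0]
    ring
  have key : ∀ i ∈ Finset.Icc 1 (N - 1),
      ∑ k ∈ Finset.Icc 1 (N - 1),
        (1 - (-1 : ℝ) ^ (i + ℓ + k)) * (2 * (i : ℝ) + 1) * (2 * (k : ℝ) + 1) * w i k
      = (2 * (i : ℝ) + 1) * (1 / (N : ℝ))
        - (-1 : ℝ) ^ ℓ * ((-1 : ℝ) ^ i * (2 * (i : ℝ) + 1)) * ((-1 : ℝ) ^ (N + 1) * V i) := by
    intro i hi
    have hw0 : ((-1 : ℝ) ^ (i + ℓ) - 1) * w i 0 = 0 := by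
      rcases Nat.even_or_odd (i + ℓ) with h | h
      · rw [h.neg_one_pow]; ring
      · rw [htri i h]; ring
    rw [hsum0]
    have hsplit : ∑ k ∈ Finset.range N,
        (1 - (-1 : ℝ) ^ (i + ℓ + k)) * (2 * (i : ℝ) + 1) * (2 * (k : ℝ) + 1) * w i k
        = (2 * (i : ℝ) + 1) * (∑ k ∈ Finset.range N, (2 * (k : ℝ) + 1) * w i k)
          - (-1 : ℝ) ^ (i + ℓ) * (2 * (i : ℝ) + 1)
            * (∑ k ∈ Finset.range N, (-1 : ℝ) ^ k * (2 * (k : ℝ) + 1) * w i k) := by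
      rw [Finset.mul_sum, Finset.mul_sum, ← Finset.sum_sub_distrib]
      refine Finset.sum_congr rfl fun k _ => ?_
      rw [pow_add]
      ring
    rw [hsplit, h1 i hi, h2 i hi]
    have hz : (1 - (-1 : ℝ) ^ (i + ℓ + 0)) * (2 * (i : ℝ) + 1) * (2 * ((0 : ℕ) : ℝ) + 1)
        * w i 0 = 0 := by
      rw [Nat.add_zero]
      push_cast
      linear_combination (-(2 * (i : ℝ) + 1)) * hw0
    rw [hz]
    rw [pow_add]
    ring
  rw [Finset.sum_congr rfl key, Finset.sum_sub_distrib, ← Finset.sum_mul]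
  have hsum : ∑ i ∈ Finset.Icc 1 (N - 1), (2 * (i : ℝ) + 1) = (N : ℝ) ^ 2 - 1 := by
    rw [hsum0, sum_odd_sq]
    norm_num
  have hpull : ∑ i ∈ Finset.Icc 1 (N - 1),
      (-1 : ℝ) ^ ℓ * ((-1 : ℝ) ^ i * (2 * (i : ℝ) + 1)) * ((-1 : ℝ) ^ (N + 1) * V i)
      = (-1 : ℝ) ^ ℓ * (-1 : ℝ) ^ (N + 1)
        * ∑ i ∈ Finset.Icc 1 (N - 1), (-1 : ℝ) ^ i * (2 * (i : ℝ) + 1) * V i := by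
    rw [Finset.mul_sum]
    refine Finset.sum_congr rfl fun i _ => by ring
  rw [hpull, h4, hsum]
  rw [show ℓ + N + 1 = ℓ + (N + 1) by omega, pow_add, pow_succ]
  field_simp
  ring
end
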